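/- arXiv:2102.10562 — 2 statements merged into one kernel-verified Lean document; each statement's English description precedes it below -/
import Mathlib

section
/- Let p be a strictly positive probability distribution on {0,1}^D, k : ({0,1}^D)² → ℝ a kernel, and for coordinate i define k_{p,i}(x,x') := (p(¬_i x)p(¬_i x')/(p(x)p(x'))) k(x,x') − (p(¬_i x)/p(x)) k(x, ¬_i x') − (p(¬_i x')/p(x')) k(¬_i x, x') + k(¬_i x, ¬_i x'). Then for any probability distribution q on {0,1}^D, E_{x,x'∼q}[k_{p,i}(x,x')] = M_k(q·p̃_i/p − q̃_i, q·p̃_i/p − q̃_i), where p̃_i(x) := p(¬_i x), q̃_i(x) := q(¬_i x), and (q·p̃_i/p)(x) := q(x)p(¬_i x)/p(x). -/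
/-!
Write `f x := q x · p(¬ᵢx) / p x`. After clearing the density ratios, the summand of the left-hand
side is `f x f x' k(x,x') − f x q x' k(x,¬ᵢx') − q x f x' k(¬ᵢx,x') + q x q x' k(¬ᵢx,¬ᵢx')`.
Since `¬ᵢ` is a bijection, every occurrence of `¬ᵢ` inside `k` can be moved onto the weight `q`
by reindexing the sum, which turns the whole expression into the quadratic form
`M_k(f − q ∘ ¬ᵢ, f − q ∘ ¬ᵢ)`.
-/

open Function

lemma Function.Involutive.update_self_apply {ι β : Type*} [DecidableEq ι] {τ : β → β}
    (hτ : Involutive τ) (i : ι) : Involutive fun x : ι → β => update x i (τ (x i)) := by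
  intro x
  simp only [update_self, hτ (x i), update_idem, update_eq_self]

section Reindex

variable {α R : Type*} [Fintype α] {σ : α → α}

lemma Function.Involutive.sum_mul_sub_mul_comp [NonUnitalNonAssocRing R] (hσ : Involutive σ)
    (f g φ : α → R) :
    ∑ x, (f x * φ x - g x * φ (σ x)) = ∑ x, (f x - g (σ x)) * φ x := by
  have hreindex : ∑ x, g (σ x) * φ x = ∑ x, g x * φ (σ x) := by
    simpa only [Involutive.coe_toPerm, hσ _] using Equiv.sum_comp (hσ.toPerm σ) fun x => g x * φ (σ x)
  simp only [sub_mul, Finset.sum_sub_distrib, hreindex]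

lemma Function.Involutive.sum_sum_eq_quadratic_form [CommRing R] (hσ : Involutive σ)
    (f g : α → R) (k : α → α → R) :
    ∑ x, ∑ x', (f x * f x' * k x x' - f x * g x' * k x (σ x')
        - g x * f x' * k (σ x) x' + g x * g x' * k (σ x) (σ x')) =
      ∑ x, ∑ x', (f x - g (σ x)) * (f x' - g (σ x')) * k x x' := by
  set ψ : α → R := fun y => ∑ x', (f x' * k y x' - g x' * k y (σ x'))
  have hψ : ∀ y, ψ y = ∑ x', (f x' - g (σ x')) * k y x' := fun y =>
    hσ.sum_mul_sub_mul_comp f g (k y)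
  calc _ = ∑ x, (f x * ψ x - g x * ψ (σ x)) := by
          refine Finset.sum_congr rfl fun x _ => ?_
          simp only [ψ, Finset.mul_sum, ← Finset.sum_sub_distrib]
          exact Finset.sum_congr rfl fun x' _ => by ring
    _ = ∑ x, (f x - g (σ x)) * ψ x := hσ.sum_mul_sub_mul_comp f g ψ
    _ = _ := by simp only [hψ, Finset.mul_sum, mul_assoc]

end Reindex

theorem stein_kernel_expectation_as_quadratic_form_general
    (D : ℕ) (p q : (Fin D → Bool) → ℝ) (k : (Fin D → Bool) → (Fin D → Bool) → ℝ)
    (i : Fin D) :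
    (∑ x, ∑ x', q x * q x' *
        ((p (Function.update x i (!x i)) * p (Function.update x' i (!x' i)) /
            (p x * p x')) * k x x'
          - (p (Function.update x i (!x i)) / p x) *
              k x (Function.update x' i (!x' i))
          - (p (Function.update x' i (!x' i)) / p x') *
              k (Function.update x i (!x i)) x'
          + k (Function.update x i (!x i)) (Function.update x' i (!x' i)))) =
    ∑ x, ∑ x',
      (q x * p (Function.update x i (!x i)) / p x - q (Function.update x i (!x i))) *
      (q x' * p (Function.update x' i (!x' i)) / p x' - q (Function.update x' i (!x' i))) *
      k x x' := by
  set σ : (Fin D → Bool) → (Fin D → Bool) := fun x => update x i (!x i)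
  have hσ : Involutive σ := Bool.involutive_not.update_self_apply i
  rw [← hσ.sum_sum_eq_quadratic_form (fun x => q x * p (σ x) / p x) q k]
  refine Finset.sum_congr rfl fun x _ => Finset.sum_congr rfl fun x' _ => ?_
  ring

theorem stein_kernel_expectation_as_quadratic_form
    (D : ℕ) (p q : (Fin D → Bool) → ℝ) (k : (Fin D → Bool) → (Fin D → Bool) → ℝ)
    (hp : ∀ x, 0 < p x) (hp1 : ∑ x, p x = 1)
    (hq0 : ∀ x, 0 ≤ q x) (hq1 : ∑ x, q x = 1)
    (hsym : ∀ x x', k x x' = k x' x) (i : Fin D) :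
    (∑ x, ∑ x', q x * q x' *
        ((p (Function.update x i (!x i)) * p (Function.update x' i (!x' i)) /
            (p x * p x')) * k x x'
          - (p (Function.update x i (!x i)) / p x) *
              k x (Function.update x' i (!x' i))
          - (p (Function.update x' i (!x' i)) / p x') *
              k (Function.update x i (!x i)) x'
          + k (Function.update x i (!x i)) (Function.update x' i (!x' i)))) =
    ∑ x, ∑ x',
      (q x * p (Function.update x i (!x i)) / p x - q (Function.update x i (!x i))) *
      (q x' * p (Function.update x' i (!x' i)) / p x' - q (Function.update x' i (!x' i))) *
      k x x' :=
  stein_kernel_expectation_as_quadratic_form_general D p q k i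
end

section
/- If q = p on {0,1}^D (both strictly positive probability distributions), then for each coordinate i, E_{x,x'∼p}[k_{p,i}(x,x')] = 0, where k_{p,i} is the Stein kernel defined from p and any symmetric kernel k. -/
/-!
Writing `σ` for the flip of bit `i` and `F x x' = p x p x' k (σ x) (σ x')`, the weighted kernel
`p x p x' k_{p,i}(x, x')` is the double difference
`F (σ x) (σ x') - F (σ x) x' - F x (σ x') + F x x'`.
Since `σ` is a bijection, each of the four terms has the same double sum, so the expectation vanishes.
-/

open Finset Function

theorem Function.involutive_update_not {ι : Type*} [DecidableEq ι] (i : ι) :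
    Involutive fun x : ι → Bool => update x i (!x i) := by
  intro x
  simp

theorem Function.Bijective.sum_sum_comp_sub_comp_sub_comp_add_eq_zero {α M : Type*} [Fintype α]
    [AddCommGroup M] {σ : α → α} (hσ : Bijective σ) (F : α → α → M) :
    ∑ x, ∑ x', (F (σ x) (σ x') - F (σ x) x' - F x (σ x') + F x x') = 0 := by
  simp only [sum_add_distrib, sum_sub_distrib, hσ.sum_comp (F _)]
  rw [hσ.sum_comp fun y => ∑ x', F y x']
  abel

section SteinKernel

variable {α : Type*} (σ : α → α) (p : α → ℝ) (k : α → α → ℝ)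

noncomputable def steinKernel (x x' : α) : ℝ :=
  p (σ x) * p (σ x') / (p x * p x') * k x x' - p (σ x) / p x * k x (σ x')
    - p (σ x') / p x' * k (σ x) x' + k (σ x) (σ x')

variable {σ p}

theorem mul_steinKernel (hσ : Involutive σ) {x x' : α} (hx : p x ≠ 0) (hx' : p x' ≠ 0) :
    p x * p x' * steinKernel σ p k x x' =
      p (σ x) * p (σ x') * k (σ (σ x)) (σ (σ x')) - p (σ x) * p x' * k (σ (σ x)) (σ x')
        - p x * p (σ x') * k (σ x) (σ (σ x')) + p x * p x' * k (σ x) (σ x') := by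
  rw [hσ x, hσ x', steinKernel]
  field_simp

theorem sum_sum_mul_steinKernel_eq_zero [Fintype α] (hσ : Involutive σ) (hp : ∀ x, p x ≠ 0) :
    ∑ x, ∑ x', p x * p x' * steinKernel σ p k x x' = 0 := by
  simp only [mul_steinKernel k hσ (hp _) (hp _)]
  exact hσ.bijective.sum_sum_comp_sub_comp_sub_comp_add_eq_zero
    fun y y' => p y * p y' * k (σ y) (σ y')

end SteinKernel

theorem stein_kernel_expectation_zero_of_eq_general
    (D : ℕ) (p : (Fin D → Bool) → ℝ) (k : (Fin D → Bool) → (Fin D → Bool) → ℝ)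
    (hp : ∀ x, 0 < p x) (i : Fin D) :
    (∑ x, ∑ x', p x * p x' *
        ((p (Function.update x i (!x i)) * p (Function.update x' i (!x' i)) /
            (p x * p x')) * k x x'
          - (p (Function.update x i (!x i)) / p x) *
              k x (Function.update x' i (!x' i))
          - (p (Function.update x' i (!x' i)) / p x') *
              k (Function.update x i (!x i)) x'
          + k (Function.update x i (!x i)) (Function.update x' i (!x' i)))) = 0 :=
  sum_sum_mul_steinKernel_eq_zero k (involutive_update_not i) fun x => (hp x).ne'

theorem stein_kernel_expectation_zero_of_eq
    (D : ℕ) (p : (Fin D → Bool) → ℝ) (k : (Fin D → Bool) → (Fin D → Bool) → ℝ)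
    (hp : ∀ x, 0 < p x) (hp1 : ∑ x, p x = 1)
    (hsym : ∀ x x', k x x' = k x' x) (i : Fin D) :
    (∑ x, ∑ x', p x * p x' *
        ((p (Function.update x i (!x i)) * p (Function.update x' i (!x' i)) /
            (p x * p x')) * k x x'
          - (p (Function.update x i (!x i)) / p x) *
              k x (Function.update x' i (!x' i))
          - (p (Function.update x' i (!x' i)) / p x') *
              k (Function.update x i (!x i)) x'
          + k (Function.update x i (!x i)) (Function.update x' i (!x' i)))) = 0 :=
  stein_kernel_expectation_zero_of_eq_general D p k hp i
end
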